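/- arXiv:0802.3822 — 5 statements merged into one kernel-verified Lean document; each statement's English description precedes it below -/
import Mathlib

section
/- Let I be an ideal (in our sense) on a countably infinite set X. Then C_I is precomplete if and only if for every A ∉ I there exist n ≥ 1 and unary functions g_1, …, g_n : X → A such that g_1⁻¹[B] ∩ … ∩ g_n⁻¹[B] ∈ I for all B ∈ I. -/
/-- The set of all finitary operations on `X`: an element of arity index `n`
is an `(n+1)`-ary operation, so that all arities are `≥ 1`. -/
abbrev Ops (X : Type) : Type := Σ n : ℕ, (Fin (n + 1) → X) → X

/-- `opImage f A` is the image `f[A^n]` of the `n`-th power of `A` under the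
`n`-ary operation `f`. -/
def opImage {X : Type} (f : Ops X) (A : Set X) : Set X :=
  f.2 '' {x | ∀ i, x i ∈ A}

/-- An ideal "in our sense": closed under subsets and finite unions, contains all
finite sets, contains at least one infinite set, and does not contain `X`. -/
def IsIdealInOurSense {X : Type} (I : Set (Set X)) : Prop :=
  (∀ A ∈ I, ∀ B ⊆ A, B ∈ I) ∧
  (∀ A ∈ I, ∀ B ∈ I, A ∪ B ∈ I) ∧
  (∀ A : Set X, A.Finite → A ∈ I) ∧
  (∃ A ∈ I, A.Infinite) ∧
  (Set.univ : Set X) ∉ I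

/-- The clone `C_I` induced by a collection of sets `I`: all operations mapping
powers of `I`-sets into `I`. -/
def idealClone {X : Type} (I : Set (Set X)) : Set (Ops X) :=
  {f | ∀ A ∈ I, opImage f A ∈ I}

/-- The unary part `C_I^{(1)}` of the clone induced by `I`. -/
def unaryPart {X : Type} (I : Set (Set X)) : Set (X → X) :=
  {f | ∀ A ∈ I, f '' A ∈ I}

/-- A clone: a set of finitary operations containing all projections and closed
under composition. -/
def IsClone {X : Type} (C : Set (Ops X)) : Prop :=
  (∀ (n : ℕ) (i : Fin (n + 1)), (⟨n, fun x => x i⟩ : Ops X) ∈ C) ∧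
  ∀ (n m : ℕ) (f : (Fin (n + 1) → X) → X) (g : Fin (n + 1) → (Fin (m + 1) → X) → X),
    (⟨n, f⟩ : Ops X) ∈ C → (∀ i, (⟨m, g i⟩ : Ops X) ∈ C) →
    (⟨m, fun x => f fun i => g i x⟩ : Ops X) ∈ C

/-- The clone generated by a set of operations. -/
def cloneGen {X : Type} (F : Set (Ops X)) : Set (Ops X) :=
  ⋂₀ {C : Set (Ops X) | IsClone C ∧ F ⊆ C}

/-- A precomplete clone: a proper clone whose only proper cover is the full clone `O`. -/
def IsPrecompleteClone {X : Type} (C : Set (Ops X)) : Prop :=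
  IsClone C ∧ C ≠ Set.univ ∧
  ∀ D : Set (Ops X), IsClone D → C ⊂ D → D = Set.univ

/-- The regularization `Î` of `I`: all sets `A` such that every infinite subset
of `A` contains an infinite member of `I`. -/
def regularization {X : Type} (I : Set (Set X)) : Set (Set X) :=
  {A | ∀ B ⊆ A, B.Infinite → ∃ C ⊆ B, C.Infinite ∧ C ∈ I}

namespace Stmt14Aux
variable {X : Type}

lemma opImage_subset_of_forall_mem {m : ℕ} {h : (Fin (m+1) → X) → X} {T : Set X}
    (hh : ∀ x, h x ∈ T) (S : Set X) : opImage ⟨m, h⟩ S ⊆ T := by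
  rintro y ⟨x, -, rfl⟩; exact hh x

lemma opImage_proj_subset (n : ℕ) (i : Fin (n+1)) (S : Set X) :
    opImage ⟨n, fun x => x i⟩ S ⊆ S := by
  rintro y ⟨x, hx, rfl⟩; exact hx i

lemma opImage_unary (t : X → X) (S : Set X) :
    opImage ⟨0, fun x => t (x 0)⟩ S = t '' S := by
  ext y
  constructor
  · rintro ⟨x, hx, rfl⟩; exact ⟨x 0, hx 0, rfl⟩
  · rintro ⟨a, ha, rfl⟩; exact ⟨fun _ => a, fun _ => ha, rfl⟩

lemma iUnion_mem_family {𝔉 : Set (Set X)}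
    (hun : ∀ S ∈ 𝔉, ∀ T ∈ 𝔉, S ∪ T ∈ 𝔉) (hemp : ∅ ∈ 𝔉) :
    ∀ {r : ℕ} (s : Fin r → Set X), (∀ i, s i ∈ 𝔉) → (⋃ i, s i) ∈ 𝔉 := by
  intro r
  induction r with
  | zero => intro s _; simpa using hemp
  | succ r ih =>
    intro s hs
    have : (⋃ i, s i) = s 0 ∪ ⋃ i : Fin r, s i.succ := by
      ext x
      simp only [Set.mem_iUnion, Set.mem_union]
      constructor
      · rintro ⟨i, hi⟩
        rcases Fin.eq_zero_or_eq_succ i with h0 | ⟨j, rfl⟩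
        · exact Or.inl (h0 ▸ hi)
        · exact Or.inr ⟨j, hi⟩
      · rintro (h | ⟨j, hj⟩)
        exacts [⟨0, h⟩, ⟨j.succ, hj⟩]
    rw [this]
    exact hun _ (hs 0) _ (ih _ fun i => hs i.succ)

lemma isClone_family (𝔉 : Set (Set X))
    (hsub : ∀ S ∈ 𝔉, ∀ T ⊆ S, T ∈ 𝔉)
    (hun : ∀ S ∈ 𝔉, ∀ T ∈ 𝔉, S ∪ T ∈ 𝔉) (hemp : ∅ ∈ 𝔉) :
    IsClone {h : Ops X | ∀ S ∈ 𝔉, opImage h S ∈ 𝔉} := by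
  constructor
  · intro n i S hS
    exact hsub S hS _ (opImage_proj_subset n i S)
  · intro n m f g hf hg S hS
    have hU : (⋃ i, opImage ⟨m, g i⟩ S) ∈ 𝔉 :=
      iUnion_mem_family hun hemp _ fun i => hg i S hS
    refine hsub _ (hf _ hU) _ ?_
    rintro y ⟨x, hx, rfl⟩
    exact ⟨fun i => g i x, fun i => Set.mem_iUnion.2 ⟨i, ⟨x, hx, rfl⟩⟩, rfl⟩

lemma exists_surj_onto [Countable X] [Nonempty X] {A₀ T : Set X}
    (hA₀ : A₀.Infinite) (hT : T.Nonempty) :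
    ∃ t : X → X, (∀ x, t x ∈ T) ∧ t '' A₀ = T := by
  obtain ⟨d, hd⟩ := Set.Countable.exists_surjective hT (Set.to_countable T)
  let e : ℕ ↪ ↥A₀ := hA₀.natEmbedding
  let f : ℕ → X := fun k => (e k : X)
  have hfinj : Function.Injective f := fun a b hab => e.injective (Subtype.ext hab)
  refine ⟨fun x => (d (Function.invFun f x) : X), fun x => (d _).2, ?_⟩
  apply Set.Subset.antisymm
  · rintro y ⟨x, -, rfl⟩; exact (d _).2
  · intro y hy
    obtain ⟨k, hk⟩ := hd ⟨y, hy⟩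
    refine ⟨f k, (e k).2, ?_⟩
    show (d (Function.invFun f (f k)) : X) = y
    rw [Function.leftInverse_invFun hfinj k, hk]

lemma exists_inj_into [Countable X] {A₁ : Set X} (h : A₁.Infinite) :
    ∃ u : X → X, Function.Injective u ∧ ∀ x, u x ∈ A₁ := by
  obtain ⟨c⟩ := countable_iff_nonempty_embedding.1 ‹Countable X›
  let e : ℕ ↪ ↥A₁ := h.natEmbedding
  refine ⟨fun x => (e (c x) : X), ?_, fun x => (e (c x)).2⟩
  intro a b hab
  exact c.injective (e.injective (Subtype.ext hab))

variable {X : Type}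

/-- The family `ℬ`: sets reachable from `I ∪ {A}` by subsets, finite unions,
and images of boxes under members of `C_I`. -/
inductive BFam (I : Set (Set X)) (A : Set X) : Set X → Prop
  | base {B : Set X} : B ∈ I → BFam I A B
  | aset : BFam I A A
  | sub {S T : Set X} : BFam I A S → T ⊆ S → BFam I A T
  | union {S T : Set X} : BFam I A S → BFam I A T → BFam I A (S ∪ T)
  | img {F : Ops X} {S : Set X} : F ∈ idealClone I → BFam I A S →
      BFam I A (opImage F S)

/-- The relativized condition `Q(S)`. -/
def QCond (I : Set (Set X)) (A S : Set X) : Prop :=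
  ∃ (k : ℕ) (g : Fin k → X → X), (∀ i x, g i x ∈ A) ∧
    ∀ B ∈ I, (S ∩ ⋂ i, g i ⁻¹' B) ∈ I

lemma bfam_Q {I : Set (Set X)} {A : Set X}
    (hSub : ∀ A ∈ I, ∀ B ⊆ A, B ∈ I)
    (hUn : ∀ A ∈ I, ∀ B ∈ I, A ∪ B ∈ I)
    (hFin : ∀ A : Set X, A.Finite → A ∈ I)
    (hA : A ∉ I) :
    ∀ S : Set X, BFam I A S → QCond I A S := by
  have hAne : A.Nonempty := by
    rcases Set.eq_empty_or_nonempty A with h | h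
    · exact absurd (hFin A (h ▸ Set.finite_empty)) hA
    · exact h
  obtain ⟨a₀, ha₀⟩ := hAne
  classical
  intro S hS
  induction hS with
  | @base B hB =>
    refine ⟨0, Fin.elim0, fun i => i.elim0, fun B' hB' => ?_⟩
    rw [Set.iInter_of_empty, Set.inter_univ]
    exact hB
  | aset =>
    refine ⟨1, fun _ x => if x ∈ A then x else a₀,
      fun i x => ?_, fun B hB => ?_⟩
    · by_cases hx : x ∈ A <;> simp [hx, ha₀]
    · refine hSub B hB _ ?_
      rintro x ⟨hxA, hxi⟩
      have := Set.mem_iInter.1 hxi 0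
      simpa [Set.mem_preimage, if_pos hxA] using this
  | @sub S T _ hTS ih =>
    obtain ⟨k, g, hgA, hgB⟩ := ih
    exact ⟨k, g, hgA, fun B hB =>
      hSub _ (hgB B hB) _ (Set.inter_subset_inter_left _ hTS)⟩
  | @union S T _ _ ihS ihT =>
    obtain ⟨k, g, hgA, hgB⟩ := ihS
    obtain ⟨k', g', hgA', hgB'⟩ := ihT
    refine ⟨k + k', fun i => Fin.addCases (motive := fun _ => X → X) g g' i,
      fun i x => ?_, fun B hB => ?_⟩
    · refine Fin.addCases (motive := fun i =>
        (Fin.addCases (motive := fun _ => X → X) g g' i) x ∈ A) ?_ ?_ i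
      · intro j; rw [Fin.addCases_left]; exact hgA j x
      · intro j; rw [Fin.addCases_right]; exact hgA' j x
    · refine hSub _ (hUn _ (hgB B hB) _ (hgB' B hB)) _ ?_
      rintro x ⟨hxST, hxi⟩
      have hxi' := Set.mem_iInter.1 hxi
      rcases hxST with hxS | hxT
      · refine Or.inl ⟨hxS, Set.mem_iInter.2 fun i => ?_⟩
        have := hxi' (Fin.castAdd k' i)
        simpa [Fin.addCases_left] using this
      · refine Or.inr ⟨hxT, Set.mem_iInter.2 fun i => ?_⟩
        have := hxi' (Fin.natAdd k i)
        simpa [Fin.addCases_right] using this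
  | @img F S hF _ ih =>
    obtain ⟨k, g, hgA, hgB⟩ := ih
    have hsel : ∀ y : X, ∃ x : Fin (F.1 + 1) → X,
        y ∈ opImage F S → (∀ j, x j ∈ S) ∧ F.2 x = y := by
      intro y
      by_cases hy : y ∈ opImage F S
      · obtain ⟨x, hx, hxy⟩ := hy
        exact ⟨x, fun _ => ⟨hx, hxy⟩⟩
      · exact ⟨fun _ => y, fun h => absurd h hy⟩
    choose sel hsel using hsel
    refine ⟨k * (F.1 + 1),
      fun c y => g (finProdFinEquiv.symm c).1 (sel y (finProdFinEquiv.symm c).2),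
      fun c y => hgA _ _, fun B hB => ?_⟩
    have hJ : (S ∩ ⋂ i, g i ⁻¹' B) ∈ I := hgB B hB
    refine hSub _ (hF _ hJ) _ ?_
    rintro y ⟨hyT, hyi⟩
    obtain ⟨hselS, hselF⟩ := hsel y hyT
    refine ⟨sel y, fun j => ⟨hselS j, Set.mem_iInter.2 fun i => ?_⟩, hselF⟩
    have := Set.mem_iInter.1 hyi (finProdFinEquiv (i, j))
    simpa using this

lemma sufficiency [Countable X] [Infinite X] {I : Set (Set X)}
    (hSub : ∀ A ∈ I, ∀ B ⊆ A, B ∈ I)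
    (hUn : ∀ A ∈ I, ∀ B ∈ I, A ∪ B ∈ I)
    (hFin : ∀ A : Set X, A.Finite → A ∈ I)
    {A₀ : Set X} (hA₀ : A₀ ∈ I) (hA₀inf : A₀.Infinite)
    (hstar : ∀ A : Set X, A ∉ I → ∃ (n : ℕ) (g : Fin (n + 1) → X → X),
        (∀ i x, g i x ∈ A) ∧ ∀ B ∈ I, (⋂ i, g i ⁻¹' B) ∈ I) :
    ∀ D : Set (Ops X), IsClone D → idealClone I ⊂ D → D = Set.univ := by
  classical
  intro D hD hCD
  obtain ⟨F, hFD, hFC⟩ := Set.exists_of_ssubset hCD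
  have hFC' : ∃ A' ∈ I, opImage F A' ∉ I := by
    by_contra hcon
    push_neg at hcon
    exact hFC hcon
  obtain ⟨A', hA'I, hAnI⟩ := hFC'
  set A : Set X := opImage F A' with hAdef
  -- every operation with range in A is in D
  have hMA : ∀ (m : ℕ) (h : (Fin (m+1) → X) → X), (∀ x, h x ∈ A) → (⟨m, h⟩ : Ops X) ∈ D := by
    intro m h hh
    have hw : ∀ a : X, ∃ x : Fin (F.1 + 1) → X,
        a ∈ A → (∀ j, x j ∈ A') ∧ F.2 x = a := by
      intro a
      by_cases ha : a ∈ A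
      · obtain ⟨x, hx, hxa⟩ := ha
        exact ⟨x, fun _ => ⟨hx, hxa⟩⟩
      · exact ⟨fun _ => a, fun h' => absurd h' ha⟩
    choose W hW using hw
    have hvC : ∀ j : Fin (F.1 + 1),
        (⟨m, fun x => W (h x) j⟩ : Ops X) ∈ idealClone I := by
      intro j S hS
      exact hSub A' hA'I _
        (opImage_subset_of_forall_mem (fun x => (hW (h x) (hh x)).1 j) S)
    have comp := hD.2 F.1 m F.2 (fun j x => W (h x) j) hFD
      (fun j => hCD.subset (hvC j))
    have heq : (fun x => F.2 fun j => W (h x) j) = h := by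
      funext x
      exact (hW (h x) (hh x)).2
    rwa [heq] at comp
  -- the decoding function p
  obtain ⟨n', g, hgA, hgB⟩ := hstar A hAnI
  obtain ⟨u, huinj, huA₀⟩ := exists_inj_into hA₀inf
  have hx₀ : Nonempty X := inferInstance
  let x₀ : X := Classical.arbitrary X
  let Φ : (Fin (n' + 2) → X) → X → Prop := fun y z =>
    (∀ i : Fin (n' + 1), g i z = y i.castSucc) ∧ u z = y (Fin.last (n' + 1))
  have hp : ∀ y : Fin (n' + 2) → X, ∃ x : X,
      ((∃ z, Φ y z) → Φ y x) ∧ (¬(∃ z, Φ y z) → x = x₀) := by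
    intro y
    by_cases hex : ∃ z, Φ y z
    · exact ⟨hex.choose, fun _ => hex.choose_spec, fun h' => absurd hex h'⟩
    · exact ⟨x₀, fun h' => absurd h' hex, fun _ => rfl⟩
  choose p hp1 hp2 using hp
  have hpC : (⟨n' + 1, p⟩ : Ops X) ∈ idealClone I := by
    intro B hB
    refine hSub _ (hUn _ (hgB B hB) _ (hFin {x₀} (Set.finite_singleton _))) _ ?_
    rintro z ⟨y, hbox, rfl⟩
    by_cases hex : ∃ z', Φ y z'
    · left
      obtain ⟨h1, -⟩ := hp1 y hex
      exact Set.mem_iInter.2 fun i => by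
        rw [Set.mem_preimage, h1 i]; exact hbox _
    · right
      simp [hp2 y hex]
  -- every operation is in D
  apply Set.eq_univ_of_forall
  rintro ⟨m, h⟩
  let q : Fin (n' + 2) → (Fin (m + 1) → X) → X := fun i =>
    Fin.lastCases (motive := fun _ => (Fin (m + 1) → X) → X)
      (fun x => u (h x)) (fun j x => g j (h x)) i
  have hq : ∀ i, (⟨m, q i⟩ : Ops X) ∈ D := by
    intro i
    refine Fin.lastCases (motive := fun i => (⟨m, q i⟩ : Ops X) ∈ D) ?_ ?_ i
    · show (⟨m, q (Fin.last (n' + 1))⟩ : Ops X) ∈ D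
      have : q (Fin.last (n' + 1)) = fun x => u (h x) := by
        simp only [q, Fin.lastCases_last]
      rw [this]
      exact hCD.subset (fun S hS => hSub A₀ hA₀ _
        (opImage_subset_of_forall_mem (fun x => huA₀ (h x)) S))
    · intro j
      show (⟨m, q j.castSucc⟩ : Ops X) ∈ D
      have : q j.castSucc = fun x => g j (h x) := by
        simp only [q, Fin.lastCases_castSucc]
      rw [this]
      exact hMA m _ (fun x => hgA j (h x))
  have comp := hD.2 (n' + 1) m p q (hCD.subset hpC) hq
  have heq : (fun x => p fun i => q i x) = h := by
    funext x
    have hΦ : Φ (fun i => q i x) (h x) := by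
      constructor
      · intro i
        show g i (h x) = q i.castSucc x
        simp only [q, Fin.lastCases_castSucc]
      · show u (h x) = q (Fin.last (n' + 1)) x
        simp only [q, Fin.lastCases_last]
    have hex : ∃ z, Φ (fun i => q i x) z := ⟨h x, hΦ⟩
    have hpΦ := hp1 (fun i => q i x) hex
    exact huinj (hpΦ.2.trans hΦ.2.symm)
  rwa [heq] at comp


lemma necessity [Countable X] [Infinite X] {I : Set (Set X)}
    (hSub : ∀ A ∈ I, ∀ B ⊆ A, B ∈ I)
    (hUn : ∀ A ∈ I, ∀ B ∈ I, A ∪ B ∈ I)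
    (hFin : ∀ A : Set X, A.Finite → A ∈ I)
    (hUniv : (Set.univ : Set X) ∉ I)
    {A₀ : Set X} (hA₀ : A₀ ∈ I) (hA₀inf : A₀.Infinite)
    (hpre : ∀ D : Set (Ops X), IsClone D → idealClone I ⊂ D → D = Set.univ)
    {A : Set X} (hA : A ∉ I) :
    ∃ (n : ℕ) (g : Fin (n + 1) → X → X),
      (∀ i x, g i x ∈ A) ∧ ∀ B ∈ I, (⋂ i, g i ⁻¹' B) ∈ I := by
  by_contra hstar
  push_neg at hstar
  have hAne : A.Nonempty := by
    rcases Set.eq_empty_or_nonempty A with h | h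
    · exact absurd (hFin A (h ▸ Set.finite_empty)) hA
    · exact h
  set D : Set (Ops X) := {h : Ops X | ∀ S ∈ {S | BFam I A S}, opImage h S ∈ {S | BFam I A S}}
    with hDdef
  have hclone : IsClone D :=
    isClone_family {S | BFam I A S}
      (fun S hS T hT => BFam.sub hS hT)
      (fun S hS T hT => BFam.union hS hT)
      (BFam.base (hFin ∅ Set.finite_empty))
  have hCsubD : idealClone I ⊆ D := fun F hF S hS => BFam.img hF hS
  obtain ⟨t, htA, htim⟩ := exists_surj_onto hA₀inf hAne
  have htopD : (⟨0, fun x => t (x 0)⟩ : Ops X) ∈ D := by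
    intro S hS
    exact BFam.sub BFam.aset (opImage_subset_of_forall_mem (fun x => htA (x 0)) S)
  have htopC : (⟨0, fun x => t (x 0)⟩ : Ops X) ∉ idealClone I := by
    intro hC
    have := hC A₀ hA₀
    rw [opImage_unary, htim] at this
    exact hA this
  have hssub : idealClone I ⊂ D :=
    ssubset_iff_subset_ne.mpr ⟨hCsubD, fun he => htopC (by rw [he]; exact htopD)⟩
  have hDuniv := hpre D hclone hssub
  obtain ⟨σ, hσA, hσim⟩ := exists_surj_onto hA₀inf (Set.univ_nonempty (α := X))
  have hσD : (⟨0, fun x => σ (x 0)⟩ : Ops X) ∈ D := by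
    rw [hDuniv]; trivial
  have hBuniv : BFam I A Set.univ := by
    have := hσD A₀ (BFam.base hA₀)
    rwa [opImage_unary, hσim] at this
  obtain ⟨k, g, hgA, hgB⟩ := bfam_Q hSub hUn hFin hA Set.univ hBuniv
  rcases k with _ | k
  · have := hgB A₀ hA₀
    rw [Set.iInter_of_empty, Set.inter_univ] at this
    exact hUniv this
  · obtain ⟨B, hB, hnot⟩ := hstar k g hgA
    have := hgB B hB
    rw [Set.univ_inter] at this
    exact hnot this


end Stmt14Aux

/-- Unary precompleteness test: `C_I` is precomplete iff for each `A ∉ I` there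
are unary functions `g₁, …, gₙ : X → A` with `⋂ᵢ gᵢ⁻¹[B] ∈ I` for all `B ∈ I`. -/

theorem stmt14 {X : Type} [Countable X] [Infinite X]
    {I : Set (Set X)} (hI : IsIdealInOurSense I) :
    IsPrecompleteClone (idealClone I) ↔
      ∀ A : Set X, A ∉ I → ∃ (n : ℕ) (g : Fin (n + 1) → X → X),
        (∀ i x, g i x ∈ A) ∧ ∀ B ∈ I, (⋂ i, g i ⁻¹' B) ∈ I := by
  obtain ⟨hSub, hUn, hFin, ⟨A₀, hA₀, hA₀inf⟩, hUniv⟩ := hI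
  constructor
  · intro hpre A hA
    exact Stmt14Aux.necessity hSub hUn hFin hUniv hA₀ hA₀inf hpre.2.2 hA
  · intro hstar
    refine ⟨?_, ?_, Stmt14Aux.sufficiency hSub hUn hFin hA₀ hA₀inf hstar⟩
    · exact Stmt14Aux.isClone_family I hSub hUn (hFin ∅ Set.finite_empty)
    · obtain ⟨σ, hσA, hσim⟩ :=
        Stmt14Aux.exists_surj_onto hA₀inf (Set.univ_nonempty (α := X))
      intro he
      have hσC : (⟨0, fun x => σ (x 0)⟩ : Ops X) ∈ idealClone I := by
        rw [he]; trivial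
      have := hσC A₀ hA₀
      rw [Stmt14Aux.opImage_unary, hσim] at this
      exact hUniv this
end

section
/- Let I be an ideal (in our sense) on a countably infinite set X, and let B ⊆ X be a set whose complement lies in I (i.e., X∖B ∈ I). Then there exists a function f : X → X such that f[B] = X and f ∈ C_I^{(1)}, i.e., f[A] ∈ I for every A ∈ I. -/
/-!
Either `B` contains an infinite set `S ∈ I`, or every member of `I` meets `B` in a finite set.
In the first case map `S` onto the set `S ∪ (X ∖ B) ∈ I` and fix every other point: the image
of `A ∈ I` then lies in `S ∪ (X ∖ B) ∪ A`. In the second case map `B` onto `X`: the image of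
`A ∈ I` is then the finite set `f[A ∩ B]` together with `A`.
-/

open Set

theorem Set.image_piecewise {α β : Type*} (s : Set α) [∀ x, Decidable (x ∈ s)]
    (f g : α → β) (t : Set α) : s.piecewise f g '' t = f '' (t ∩ s) ∪ g '' (t \ s) := by
  conv_lhs => rw [← inter_union_sdiff t s, image_union]
  rw [((piecewise_eqOn s f g).mono inter_subset_right).image_eq,
    ((piecewise_eqOn_compl s f g).mono fun _ hx => hx.2).image_eq]

theorem Set.Infinite.exists_image_eq {α β : Type*} {S : Set α} {T : Set β}
    (hS : S.Infinite) (hSc : S.Countable) (hTc : T.Countable) (hT : T.Nonempty) :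
    ∃ g : α → β, g '' S = T := by
  have : Countable S := hSc.to_subtype
  have : Infinite S := hS.to_subtype
  obtain ⟨e⟩ : Nonempty (ℕ ≃ S) := nonempty_equiv_of_countable
  obtain ⟨φ, rfl⟩ := hTc.exists_eq_range hT
  have hinj : Function.Injective fun n => (e n : α) := Subtype.val_injective.comp e.injective
  refine ⟨Function.extend (fun n => (e n : α)) φ fun _ => φ 0, ?_⟩
  rw [image_eq_range, ← e.surjective.range_comp]
  exact congrArg range (funext fun n => hinj.extend_apply φ (fun _ => φ 0) n)

namespace IsIdealInOurSense

variable {X : Type} {I : Set (Set X)}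

theorem mem_of_subset (hI : IsIdealInOurSense I) {A B : Set X} (hA : A ∈ I) (hBA : B ⊆ A) :
    B ∈ I :=
  hI.1 A hA B hBA

theorem union_mem (hI : IsIdealInOurSense I) {A B : Set X} (hA : A ∈ I) (hB : B ∈ I) :
    A ∪ B ∈ I :=
  hI.2.1 A hA B hB

theorem mem_of_finite (hI : IsIdealInOurSense I) {A : Set X} (hA : A.Finite) : A ∈ I :=
  hI.2.2.1 A hA

theorem infinite_of_diff_mem (hI : IsIdealInOurSense I) {B : Set X} (hB : univ \ B ∈ I) :
    B.Infinite := fun hfin =>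
  hI.2.2.2.2 <| by simpa using hI.union_mem (hI.mem_of_finite hfin) hB

theorem exists_image_eq_univ_of_subset (hI : IsIdealInOurSense I) {B S : Set X} (hSB : S ⊆ B)
    {g : X → X} (hg : g '' S ∪ (B \ S) = univ) (hgI : ∀ A ∈ I, g '' (A ∩ S) ∈ I) :
    ∃ f : X → X, f '' B = univ ∧ ∀ A ∈ I, f '' A ∈ I := by
  classical
  refine ⟨S.piecewise g id, ?_, fun A hA => ?_⟩
  · rwa [image_piecewise, inter_eq_right.2 hSB, image_id]
  · rw [image_piecewise, image_id]
    exact hI.union_mem (hgI A hA) (hI.mem_of_subset hA sdiff_subset)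

end IsIdealInOurSense

theorem stmt15_general {X : Type} [Countable X]
    {I : Set (Set X)} (hI : IsIdealInOurSense I)
    {B : Set X} (hB : Set.univ \ B ∈ I) :
    ∃ f : X → X, f '' B = Set.univ ∧ ∀ A ∈ I, f '' A ∈ I := by
  by_cases h : ∃ S ∈ I, S ⊆ B ∧ S.Infinite
  · obtain ⟨S, hSI, hSB, hS⟩ := h
    obtain ⟨g, hg⟩ := hS.exists_image_eq S.to_countable (univ \ B ∪ S).to_countable
      (hS.nonempty.mono subset_union_right)
    refine hI.exists_image_eq_univ_of_subset hSB (g := g) ?_ fun A _ => ?_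
    · rw [hg]
      ext x
      by_cases x ∈ B <;> by_cases x ∈ S <;> simp_all
    · exact hI.mem_of_subset (hI.union_mem hB hSI) (hg ▸ image_mono inter_subset_right)
  · push Not at h
    have hBinf := hI.infinite_of_diff_mem hB
    obtain ⟨g, hg⟩ := hBinf.exists_image_eq B.to_countable countable_univ
      ⟨hBinf.nonempty.some, trivial⟩
    refine hI.exists_image_eq_univ_of_subset subset_rfl (g := g) (by simp [hg]) fun A hA => ?_
    exact hI.mem_of_finite <|
      (h _ (hI.mem_of_subset hA inter_subset_left) inter_subset_right).image g

/-- Every set whose complement is in `I` can be mapped onto all of `X` by a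
unary function in `C_I`. -/
theorem stmt15 {X : Type} [Countable X] [Infinite X]
    {I : Set (Set X)} (hI : IsIdealInOurSense I)
    {B : Set X} (hB : Set.univ \ B ∈ I) :
    ∃ f : X → X, f '' B = Set.univ ∧ ∀ A ∈ I, f '' A ∈ I :=
  stmt15_general hI hB
end

section
/- Let F be a non-principal ultrafilter on a countably infinite set X. Then: (1) an n-ary operation f on X belongs to U_F if and only if fix(f) = { x ∈ X : f(x,…,x) = x } ∈ F; (2) S_F is a proper subset of U_F; in fact there exists a binary operation f on X with fix(f) ∈ F which is not F-continuous. -/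
/-- An ultrafilter (as a set of sets): closed under supersets and finite
intersections, not containing `∅`, and containing `A` or `X \ A` for each `A`. -/
def IsUltrafilterSet {X : Type} (F : Set (Set X)) : Prop :=
  (∀ A ∈ F, ∀ B, A ⊆ B → B ∈ F) ∧
  (∀ A ∈ F, ∀ B ∈ F, A ∩ B ∈ F) ∧
  (∅ : Set X) ∉ F ∧
  ∀ A : Set X, A ∈ F ∨ Set.univ \ A ∈ F

/-- The clone `S_F` of all `F`-continuous operations: `f` is `F`-continuous iff
for every `B ∈ F` there is `C ∈ F` with `f[C^n] ⊆ B`. -/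
def SF {X : Type} (F : Set (Set X)) : Set (Ops X) :=
  {f | ∀ B ∈ F, ∃ C ∈ F, opImage f C ⊆ B}

/-- The unary `F`-continuous functions `S_F^{(1)}`. -/
def SF1 {X : Type} (F : Set (Set X)) : Set (X → X) :=
  {f | ∀ B ∈ F, f ⁻¹' B ∈ F}

/-- `U_F = Pol(S_F^{(1)})`: all operations `f` such that `f(g₁,…,gₙ) ∈ S_F^{(1)}`
whenever `g₁,…,gₙ ∈ S_F^{(1)}`. -/
def UF {X : Type} (F : Set (Set X)) : Set (Ops X) :=
  {f | ∀ g : Fin (f.1 + 1) → X → X, (∀ i, g i ∈ SF1 F) →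
        (fun x => f.2 fun i => g i x) ∈ SF1 F}

private lemma natfix (F : Set (Set ℕ)) (hF : IsUltrafilterSet F)
    (g : ℕ → ℕ) (hg : ∀ B ∈ F, g ⁻¹' B ∈ F) : {n | g n = n} ∈ F := by
  classical
  obtain ⟨hup, hinter, hempty, halt⟩ := hF
  have huniv : (Set.univ : Set ℕ) ∈ F := by
    rcases halt ∅ with h | h
    · exact absurd h hempty
    · simpa using h
  have hne : ∀ B ∈ F, B.Nonempty := by
    intro B hB
    rcases B.eq_empty_or_nonempty with rfl | h
    · exact absurd hB hempty
    · exact h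
  have prime : ∀ A B : Set ℕ, A ∪ B ∈ F → A ∈ F ∨ B ∈ F := by
    intro A B hAB
    rcases halt A with hA | hA
    · exact Or.inl hA
    · refine Or.inr (hup _ (hinter _ hAB _ hA) B ?_)
      rintro x ⟨hx1, hx2⟩
      rcases hx1 with h | h
      · exact absurd h hx2.2
      · exact h
  by_contra hfix
  have hN : Set.univ \ {n | g n = n} ∈ F := (halt _).resolve_left hfix
  have hNunion : {n | n < g n} ∪ {n | g n < n} ∈ F := by
    refine hup _ hN _ ?_
    intro x hx
    rcases Nat.lt_trichotomy x (g x) with h | h | h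
    · exact Or.inl h
    · exact absurd h.symm hx.2
    · exact Or.inr h
  -- common finisher
  have finish : ∀ (c : ℕ → ℕ) (S : Set ℕ), S ∈ F → (∀ n, c n < 2) →
      (∀ x ∈ S, c (g x) ≠ c x) → False := by
    intro c S hS hc2 hproper
    have main : ∀ i : ℕ, {n | c n = i} ∈ F → False := by
      intro i hC
      have hB : S ∩ ({n | c n = i} ∩ g ⁻¹' {n | c n = i}) ∈ F :=
        hinter _ hS _ (hinter _ hC _ (hg _ hC))
      obtain ⟨x, hxS, hxC, hxg⟩ := hne _ hB
      exact hproper x hxS (hxg.trans hxC.symm)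
    have hCU : {n | c n = 0} ∪ {n | c n = 1} ∈ F := by
      refine hup _ huniv _ ?_
      intro x _
      have := hc2 x
      simp only [Set.mem_union, Set.mem_setOf_eq]
      omega
    rcases prime _ _ hCU with h | h
    · exact main 0 h
    · exact main 1 h
  rcases prime _ _ hNunion with hS | hS
  · -- increasing case
    set G : ℕ → ℕ := fun n => if n < g n then g n else n + 1 with hGdef
    have hG : ∀ n, n < G n := by
      intro n
      show n < if n < g n then g n else n + 1
      split
      · assumption
      · omega
    have hGS : ∀ x ∈ {n | n < g n}, G x = g x := by
      intro x hx
      show (if x < g x then g x else x + 1) = g x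
      exact if_pos hx
    have hmono : ∀ m : ℕ, StrictMono (fun k => G^[k] m) := by
      intro m
      apply strictMono_nat_of_lt_succ
      intro k
      rw [Function.iterate_succ_apply']
      exact hG _
    have key : ∀ n m k j k' j', G^[k] n = G^[j] m → G^[k'] n = G^[j'] m →
        j + k' = j' + k := by
      have half : ∀ n m k j k' j', k ≤ k' → G^[k] n = G^[j] m → G^[k'] n = G^[j'] m →
          j + k' = j' + k := by
        intro n m k j k' j' hkk h1 h2
        have e1 : G^[k' - k + j] m = G^[j'] m := by
          rw [Function.iterate_add_apply, ← h1, ← Function.iterate_add_apply]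
          rw [Nat.sub_add_cancel hkk]
          exact h2
        have := (hmono m).injective e1
        omega
      intro n m k j k' j' h1 h2
      rcases le_total k k' with h | h
      · exact half n m k j k' j' h h1 h2
      · have := half n m k' j' k j h h2 h1
        omega
    set Rel : ℕ → ℕ → Prop := fun n m => ∃ k j, G^[k] n = G^[j] m with hReldef
    have htrans : ∀ n m p, Rel n m → Rel m p → Rel n p := by
      rintro n m p ⟨k, j, h1⟩ ⟨k', j', h2⟩
      refine ⟨k' + k, j + j', ?_⟩
      rw [Function.iterate_add_apply, h1, ← Function.iterate_add_apply,
        Nat.add_comm k' j, Function.iterate_add_apply, h2, ← Function.iterate_add_apply]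
    have hsymm : ∀ n m, Rel n m → Rel m n := by
      rintro n m ⟨k, j, h⟩; exact ⟨j, k, h.symm⟩
    have hrel_g : ∀ n, Rel n (G n) := by
      intro n; exact ⟨1, 0, rfl⟩
    set r : ℕ → ℕ := fun n => sInf {m | Rel n m} with hrdef
    have hr : ∀ n, Rel n (r n) := by
      intro n
      exact Nat.sInf_mem (⟨n, ⟨0, 0, rfl⟩⟩ : Set.Nonempty {m | Rel n m})
    have hrg : ∀ n, r (G n) = r n := by
      intro n
      have hclass : {m | Rel (G n) m} = {m | Rel n m} := by
        ext m
        constructor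
        · intro h; exact htrans n (G n) m (hrel_g n) h
        · intro h; exact htrans (G n) n m (hsymm n (G n) (hrel_g n)) h
      simp only [hrdef, hclass]
    choose K J hKJ using hr
    have hproper : ∀ n, (J (G n) + K (G n)) % 2 ≠ (J n + K n) % 2 := by
      intro n
      have h1 : G^[K (G n)] (G n) = G^[J (G n)] (r n) := by
        rw [← hrg n]; exact hKJ (G n)
      have h2 : G^[K n] (G n) = G^[J n + 1] (r n) := by
        rw [← Function.iterate_succ_apply, Function.iterate_succ_apply', hKJ n]
        exact (Function.iterate_succ_apply' G (J n) (r n)).symm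
      have := key (G n) (r n) _ _ _ _ h1 h2
      omega
    refine finish (fun n => (J n + K n) % 2) _ hS (fun n => Nat.mod_lt _ (by norm_num)) ?_
    intro x hx
    have := hproper x
    rw [hGS x hx] at this
    exact this
  · -- decreasing case
    have hex : ∀ n, ∃ t, g^[t] n ≤ g^[t + 1] n := by
      intro n
      by_contra h
      push_neg at h
      have hdesc : ∀ t, g^[t] n + t ≤ n := by
        intro t
        induction t with
        | zero => simp
        | succ t ih =>
          have := h t
          omega
      have := hdesc (n + 1)
      omega
    have hT1 : ∀ x, g x < x → 0 < Nat.find (hex x) := by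
      intro x hx
      rcases Nat.eq_zero_or_pos (Nat.find (hex x)) with h | h
      · have := Nat.find_spec (hex x)
        rw [h] at this
        simp only [Function.iterate_zero, id_eq, Nat.zero_add, Function.iterate_one] at this
        omega
      · exact h
    have heq : ∀ x t, (g^[t] (g x) ≤ g^[t + 1] (g x)) ↔ (g^[t + 1] x ≤ g^[t + 1 + 1] x) := by
      intro x t
      simp only [Function.iterate_succ_apply]
    have hshift : ∀ x, g x < x → Nat.find (hex x) = Nat.find (hex (g x)) + 1 := by
      intro x hx
      have h1 := hT1 x hx
      have h2 : Nat.find (hex (g x)) = Nat.find (hex x) - 1 := by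
        rw [Nat.find_eq_iff]
        refine ⟨(heq x _).mpr ?_, ?_⟩
        · have h3 : Nat.find (hex x) - 1 + 1 = Nat.find (hex x) := by omega
          rw [h3]
          exact Nat.find_spec (hex x)
        · intro m hm hcon
          exact Nat.find_min (hex x) (by omega : m + 1 < Nat.find (hex x)) ((heq x m).mp hcon)
      omega
    refine finish (fun n => Nat.find (hex n) % 2) _ hS (fun n => Nat.mod_lt _ (by norm_num)) ?_
    intro x hx
    have h2 := hshift x hx
    show Nat.find (hex (g x)) % 2 ≠ Nat.find (hex x) % 2
    omega

private lemma univ_mem_uf {X : Type} {F : Set (Set X)} (hF : IsUltrafilterSet F) :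
    (Set.univ : Set X) ∈ F := by
  rcases hF.2.2.2 ∅ with h | h
  · exact absurd h hF.2.2.1
  · simpa using h

private lemma fixlem {X : Type} [Countable X] [Infinite X]
    {F : Set (Set X)} (hF : IsUltrafilterSet F)
    (g : X → X) (hg : ∀ B ∈ F, g ⁻¹' B ∈ F) : {x | g x = x} ∈ F := by
  obtain ⟨e⟩ : Nonempty (X ≃ ℕ) := nonempty_equiv_of_countable
  set F' : Set (Set ℕ) := {B | e ⁻¹' B ∈ F} with hF'def
  have hF' : IsUltrafilterSet F' := by
    obtain ⟨hup, hinter, hempty, halt⟩ := hF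
    refine ⟨?_, ?_, ?_, ?_⟩
    · intro A hA B hAB
      exact hup _ hA _ (Set.preimage_mono hAB)
    · intro A hA B hB
      exact hinter _ hA _ hB
    · simpa [hF'def] using hempty
    · intro A
      rcases halt (e ⁻¹' A) with h | h
      · exact Or.inl h
      · right
        show e ⁻¹' (Set.univ \ A) ∈ F
        rw [Set.preimage_diff]
        simpa using h
  have hg' : ∀ B ∈ F', (fun n => e (g (e.symm n))) ⁻¹' B ∈ F' := by
    intro B hB
    show e ⁻¹' ((fun n => e (g (e.symm n))) ⁻¹' B) ∈ F
    have : e ⁻¹' ((fun n => e (g (e.symm n))) ⁻¹' B) = g ⁻¹' (e ⁻¹' B) := by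
      ext x
      simp
    rw [this]
    exact hg _ hB
  have hres := natfix F' hF' _ hg'
  have : e ⁻¹' {n | e (g (e.symm n)) = n} = {x | g x = x} := by
    ext x
    simp
  rw [hF'def] at hres
  rw [← this]
  exact hres

private lemma finterlem {X : Type} {F : Set (Set X)} (hF : IsUltrafilterSet F)
    {ι : Type} (s : Finset ι) (A : ι → Set X) (h : ∀ i ∈ s, A i ∈ F) :
    {x | ∀ i ∈ s, x ∈ A i} ∈ F := by
  classical
  induction s using Finset.induction_on with
  | empty => simpa using univ_mem_uf hF
  | @insert a s ha ih =>
    have hstep : {x | ∀ i ∈ insert a s, x ∈ A i} = A a ∩ {x | ∀ i ∈ s, x ∈ A i} := by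
      ext x
      simp only [Set.mem_inter_iff, Set.mem_setOf_eq, Finset.mem_insert]
      constructor
      · intro hx
        exact ⟨hx a (Or.inl rfl), fun i hi => hx i (Or.inr hi)⟩
      · rintro ⟨h1, h2⟩ i (rfl | hi)
        · exact h1
        · exact h2 i hi
    rw [hstep]
    exact hF.2.1 _ (h a (Finset.mem_insert_self a s)) _
      (ih fun i hi => h i (Finset.mem_insert_of_mem hi))

/-- For a non-principal ultrafilter `F`: (1) `f ∈ U_F` iff `fix(f) ∈ F`;
(2) `S_F ⊊ U_F`, witnessed by a binary operation with full fixed-point set which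
is not `F`-continuous. -/
theorem stmt17 {X : Type} [Countable X] [Infinite X]
    {F : Set (Set X)} (hF : IsUltrafilterSet F)
    (hnp : ∀ A : Set X, A.Finite → Set.univ \ A ∈ F) :
    (∀ f : Ops X, f ∈ UF F ↔ {x | f.2 (fun _ => x) = x} ∈ F) ∧
    SF F ⊂ UF F ∧
    ∃ f : (Fin 2 → X) → X,
      {x | f (fun _ => x) = x} ∈ F ∧ (⟨1, f⟩ : Ops X) ∉ SF F := by
  classical
  have huniv := univ_mem_uf hF
  have part1 : ∀ f : Ops X, f ∈ UF F ↔ {x | f.2 (fun _ => x) = x} ∈ F := by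
    intro f
    constructor
    · intro h
      have hid : ∀ i : Fin (f.1 + 1), (fun x : X => x) ∈ SF1 F := by
        intro i B hB
        simpa using hB
      have hd := h (fun _ => fun x => x) hid
      exact fixlem hF _ hd
    · intro hfix g hgs B hB
      have hfixg : ∀ i, {x | g i x = x} ∈ F := fun i => fixlem hF _ (hgs i)
      have hD : {x | ∀ i ∈ (Finset.univ : Finset (Fin (f.1 + 1))), x ∈ {y | g i y = y}} ∈ F :=
        finterlem hF _ _ (fun i _ => hfixg i)
      have hE : ({x | f.2 (fun _ => x) = x} ∩
          ({x | ∀ i ∈ (Finset.univ : Finset (Fin (f.1 + 1))), x ∈ {y | g i y = y}} ∩ B)) ∈ F :=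
        hF.2.1 _ hfix _ (hF.2.1 _ hD _ hB)
      refine hF.1 _ hE _ ?_
      rintro x ⟨h1, h2, h3⟩
      show f.2 (fun i => g i x) ∈ B
      have heq : (fun i => g i x) = (fun _ => x) := by
        funext i
        exact h2 i (Finset.mem_univ i)
      have h1' : f.2 (fun _ => x) = x := h1
      rw [heq, h1']
      exact h3
  have hSFsub : SF F ⊆ UF F := by
    intro f hf g hgs B hB
    obtain ⟨C, hC, hsub⟩ := hf B hB
    have hD : {x | ∀ i ∈ (Finset.univ : Finset (Fin (f.1 + 1))), x ∈ (g i) ⁻¹' C} ∈ F :=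
      finterlem hF _ _ (fun i _ => hgs i C hC)
    refine hF.1 _ hD _ ?_
    intro x hx
    show f.2 (fun i => g i x) ∈ B
    exact hsub ⟨fun i => g i x, fun i => hx i (Finset.mem_univ i), rfl⟩
  obtain ⟨x0⟩ : Nonempty X := inferInstance
  have hB0 : (Set.univ \ {x0} : Set X) ∈ F := hnp {x0} (Set.finite_singleton x0)
  have hinf : ∀ C ∈ F, C.Nontrivial := by
    intro C hC
    have hCinf : C.Infinite := by
      by_contra h
      rw [Set.not_infinite] at h
      have h2 := hnp C h
      have h4 := hF.2.1 _ hC _ h2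
      have h3 : C ∩ (Set.univ \ C) = ∅ := by
        ext x; simp
      rw [h3] at h4
      exact hF.2.2.1 h4
    exact hCinf.nontrivial
  set w : (Fin 2 → X) → X := fun v => if v 0 = v 1 then v 0 else x0 with hwdef
  have hwfix : {x | w (fun _ => x) = x} ∈ F := by
    have heq : {x : X | w (fun _ => x) = x} = Set.univ := by
      ext x
      simp [hwdef]
    rw [heq]
    exact huniv
  have hwnot : (⟨1, w⟩ : Ops X) ∉ SF F := by
    intro hw
    obtain ⟨C, hC, hsub⟩ := hw _ hB0
    obtain ⟨x, hx, y, hy, hxy⟩ := hinf C hC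
    have hval : w (fun i : Fin 2 => if i = 0 then x else y) = x0 := by
      show (if (if (0 : Fin 2) = 0 then x else y) = (if (1 : Fin 2) = 0 then x else y)
          then (if (0 : Fin 2) = 0 then x else y) else x0) = x0
      rw [if_pos rfl, if_neg (by decide : ¬ (1 : Fin 2) = 0), if_neg hxy]
    have hmem : x0 ∈ opImage ⟨1, w⟩ C := by
      refine ⟨fun i => if i = 0 then x else y, ?_, hval⟩
      intro i
      dsimp only
      split <;> assumption
    have := hsub hmem
    simp at this
  refine ⟨part1, ?_, ⟨w, hwfix, hwnot⟩⟩
  rw [Set.ssubset_iff_of_subset hSFsub]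
  exact ⟨⟨1, w⟩, (part1 ⟨1, w⟩).mpr hwfix, hwnot⟩
end

section
/- Let F be a proper filter on an infinite set X (F ≠ {X} and F ≠ P(X)). Then the following are equivalent: (0) U_F is a precomplete clone; (1) there is no proper filter G with G ⊋ F and S_F^{(1)} ⊊ S_G^{(1)}; (2) for every A ⊆ X with A ∉ F there exists an F-continuous function f : X → X with f⁻¹[A] = ∅; (3) ⟨S_F ∪ {h}⟩ = O for every unary function h that is not F-continuous. -/
/-- A filter (as a nonempty set of sets closed under supersets and finite
intersections). -/
def IsFilterSet {X : Type} (F : Set (Set X)) : Prop :=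
  F.Nonempty ∧
  (∀ A ∈ F, ∀ B, A ⊆ B → B ∈ F) ∧
  (∀ A ∈ F, ∀ B ∈ F, A ∩ B ∈ F)

section Aux

variable {X : Type}

lemma filt_univ_mem {F : Set (Set X)} (hF : IsFilterSet F) : Set.univ ∈ F := by
  obtain ⟨A, hA⟩ := hF.1
  exact hF.2.1 A hA _ (Set.subset_univ A)

lemma filt_empty_not_mem {F : Set (Set X)} (hF : IsFilterSet F) (hF2 : F ≠ Set.univ) :
    ∅ ∉ F := by
  intro h
  apply hF2
  ext B
  simp only [Set.mem_univ, iff_true]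
  exact hF.2.1 ∅ h B (Set.empty_subset B)

lemma filt_exists_proper {F : Set (Set X)} (hF : IsFilterSet F) (hF1 : F ≠ {Set.univ}) :
    ∃ B ∈ F, B ≠ Set.univ := by
  by_contra h
  push_neg at h
  apply hF1
  ext B
  simp only [Set.mem_singleton_iff]
  exact ⟨fun hB => h B hB, fun hB => hB ▸ filt_univ_mem hF⟩

lemma id_mem_SF1 {F : Set (Set X)} : (fun x : X => x) ∈ SF1 F := fun _ hB => hB

lemma comp_mem_SF1 {F : Set (Set X)} {f g : X → X} (hf : f ∈ SF1 F) (hg : g ∈ SF1 F) :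
    (fun x => f (g x)) ∈ SF1 F := fun B hB => hg _ (hf B hB)

lemma fin_iInter_mem {P : Set (Set X)} (hP : ∀ A ∈ P, ∀ B ∈ P, A ∩ B ∈ P) :
    ∀ (n : ℕ) (s : Fin (n + 1) → Set X), (∀ i, s i ∈ P) → (⋂ i, s i) ∈ P := by
  intro n
  induction n with
  | zero =>
    intro s hs
    have he : (⋂ i, s i) = s 0 := by
      apply Set.Subset.antisymm (Set.iInter_subset s 0)
      intro x hx
      rw [Set.mem_iInter]
      intro i
      fin_cases i
      exact hx
    rw [he]; exact hs 0
  | succ k ih =>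
    intro s hs
    have he : (⋂ i, s i) = (⋂ i : Fin (k + 1), s i.castSucc) ∩ s (Fin.last (k + 1)) := by
      ext x
      simp only [Set.mem_iInter, Set.mem_inter_iff]
      constructor
      · intro h; exact ⟨fun i => h _, h _⟩
      · rintro ⟨h1, h2⟩ i
        exact Fin.lastCases h2 h1 i
    rw [he]
    exact hP _ (ih _ fun i => hs _) _ (hs _)

lemma SF1_op_mem {F : Set (Set X)} {f : X → X} (hf : f ∈ SF1 F) (n : ℕ) :
    (⟨n, fun x => f (x 0)⟩ : Ops X) ∈ SF F := by
  intro B hB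
  refine ⟨f ⁻¹' B, hf B hB, ?_⟩
  rintro y ⟨x, hx, rfl⟩
  exact hx 0

lemma SF_subset_UF {F : Set (Set X)} (hF : IsFilterSet F) : SF F ⊆ UF F := by
  rintro ⟨n, f⟩ hf g hg B hB
  obtain ⟨C, hC, hCB⟩ := hf B hB
  refine hF.2.1 (⋂ i, (g i) ⁻¹' C) ?_ _ ?_
  · exact fin_iInter_mem (fun A hA B' hB' => hF.2.2 A hA B' hB') n _ (fun i => hg i C hC)
  · intro x hx
    rw [Set.mem_iInter] at hx
    exact hCB ⟨fun i => g i x, fun i => hx i, rfl⟩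

lemma SF1_op_mem_UF {F : Set (Set X)} {f : X → X} (hf : f ∈ SF1 F) :
    (⟨0, fun x => f (x 0)⟩ : Ops X) ∈ UF F := fun g hg B hB => (hg 0) _ (hf B hB)

lemma isClone_UF {F : Set (Set X)} : IsClone (UF F) := by
  constructor
  · intro n i g hg
    exact hg i
  · intro n m f g hf hg k hk
    exact hf (fun i y => g i fun j => k j y) (fun i => hg i k hk)

lemma UF_ne_univ {F : Set (Set X)} (hF : IsFilterSet F) (hF1 : F ≠ {Set.univ})
    (hF2 : F ≠ Set.univ) : UF F ≠ Set.univ := by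
  obtain ⟨B₀, hB₀F, hB₀⟩ := filt_exists_proper hF hF1
  have hc : ∃ c, c ∉ B₀ := by
    by_contra h
    push_neg at h
    exact hB₀ (Set.eq_univ_of_forall h)
  obtain ⟨c, hc⟩ := hc
  intro h
  have hmem : (⟨0, fun _ => c⟩ : Ops X) ∈ UF F := h ▸ Set.mem_univ _
  have h2 : (fun _ : X => c) ⁻¹' B₀ ∈ F := hmem (fun _ x => x) (fun _ => id_mem_SF1) B₀ hB₀F
  have he : (fun _ : X => c) ⁻¹' B₀ = ∅ := by
    ext x; simp [hc]
  rw [he] at h2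
  exact filt_empty_not_mem hF hF2 h2

end Aux

section Bad

variable {X : Type}

/-- The filter generated by `F` together with all sets `f⁻¹[A]`, `f ∈ S_F^{(1)}`. -/
def GG (F : Set (Set X)) (A : Set X) : Set (Set X) :=
  {B | ∃ C ∈ F, ∃ f ∈ SF1 F, C ∩ f ⁻¹' A ⊆ B}

/-- Functions agreeing with an `F`-continuous function on a `GG`-large set. -/
def NN (F : Set (Set X)) (A : Set X) : Set (X → X) :=
  {g | ∃ W ∈ GG F A, ∃ m ∈ SF1 F, ∀ x ∈ W, g x = m x}

/-- The polymorphism clone of `NN F A`. -/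
def DD (F : Set (Set X)) (A : Set X) : Set (Ops X) :=
  {f | ∀ g : Fin (f.1 + 1) → X → X, (∀ i, g i ∈ NN F A) →
        (fun x => f.2 fun i => g i x) ∈ NN F A}

variable {F : Set (Set X)} {A : Set X}

lemma GG_superset {B B' : Set X} (hB : B ∈ GG F A) (h : B ⊆ B') : B' ∈ GG F A := by
  obtain ⟨C, hC, f, hf, hsub⟩ := hB
  exact ⟨C, hC, f, hf, hsub.trans h⟩

lemma mem_GG_of_mem_F {B : Set X} (hB : B ∈ F) : B ∈ GG F A :=
  ⟨B, hB, fun x => x, id_mem_SF1, Set.inter_subset_left⟩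

lemma A_mem_GG (hF : IsFilterSet F) : A ∈ GG F A :=
  ⟨Set.univ, filt_univ_mem hF, fun x => x, id_mem_SF1, Set.inter_subset_right⟩

lemma GG_inter (hF : IsFilterSet F) {B B' : Set X} (hB : B ∈ GG F A) (hB' : B' ∈ GG F A) :
    B ∩ B' ∈ GG F A := by
  classical
  obtain ⟨C, hC, f, hf, hsub⟩ := hB
  obtain ⟨C', hC', f', hf', hsub'⟩ := hB'
  refine ⟨C ∩ C', hF.2.2 _ hC _ hC', fun x => if f x ∈ A then f' x else f x, ?_, ?_⟩
  · intro B'' hB''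
    refine hF.2.1 (f ⁻¹' B'' ∩ f' ⁻¹' B'') (hF.2.2 _ (hf _ hB'') _ (hf' _ hB'')) _ ?_
    rintro x ⟨h1, h2⟩
    simp only [Set.mem_preimage]
    split <;> assumption
  · rintro x ⟨⟨hxC, hxC'⟩, hxA⟩
    simp only [Set.mem_preimage] at hxA
    by_cases hfx : f x ∈ A
    · have hf'x : f' x ∈ A := by simpa [hfx] using hxA
      exact ⟨hsub ⟨hxC, hfx⟩, hsub' ⟨hxC', hf'x⟩⟩
    · exact absurd (by simpa [hfx] using hxA) hfx

/-- Positivity: if no `F`-continuous function avoids `A`, then `C ∩ f⁻¹[A]` is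
nonempty for all `C ∈ F`, `f ∈ S_F^{(1)}`. -/
lemma pos_of_bad (hF : IsFilterSet F) (hF2 : F ≠ Set.univ)
    (Hne : ∀ f ∈ SF1 F, f ⁻¹' A ≠ ∅) :
    ∀ f ∈ SF1 F, ∀ C ∈ F, (C ∩ f ⁻¹' A).Nonempty := by
  intro f hf C hC
  rw [Set.nonempty_iff_ne_empty]
  intro hdisj
  obtain ⟨c₀, hc₀⟩ : C.Nonempty := by
    rw [Set.nonempty_iff_ne_empty]
    rintro rfl
    exact filt_empty_not_mem hF hF2 hC
  classical
  have hf'M : (fun x => if x ∈ C then f x else f c₀) ∈ SF1 F := by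
    intro B hB
    refine hF.2.1 (C ∩ f ⁻¹' B) (hF.2.2 C hC _ (hf B hB)) _ ?_
    rintro x ⟨hxC, hxB⟩
    simp only [Set.mem_preimage, if_pos hxC]
    exact hxB
  apply Hne _ hf'M
  ext x
  simp only [Set.mem_preimage, Set.mem_empty_iff_false, iff_false]
  intro hx
  by_cases hxC : x ∈ C
  · rw [if_pos hxC] at hx
    have : x ∈ C ∩ f ⁻¹' A := ⟨hxC, hx⟩
    rw [hdisj] at this
    exact this
  · rw [if_neg hxC] at hx
    have : c₀ ∈ C ∩ f ⁻¹' A := ⟨hc₀, hx⟩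
    rw [hdisj] at this
    exact this

lemma GG_empty_not_mem (hpos : ∀ f ∈ SF1 F, ∀ C ∈ F, (C ∩ f ⁻¹' A).Nonempty) :
    ∅ ∉ GG F A := by
  rintro ⟨C, hC, f, hf, hsub⟩
  obtain ⟨x, hx⟩ := hpos f hf C hC
  exact hsub hx

lemma SF1_subset_SF1_GG (hF : IsFilterSet F) {g : X → X} (hg : g ∈ SF1 F) :
    g ∈ SF1 (GG F A) := by
  intro B hB
  obtain ⟨C, hC, f, hf, hsub⟩ := hB
  refine ⟨g ⁻¹' C, hg C hC, fun x => f (g x), comp_mem_SF1 hf hg, ?_⟩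
  rintro x ⟨h1, h2⟩
  exact hsub ⟨h1, h2⟩

end Bad

section Bad2

variable {X : Type} {F : Set (Set X)} {A : Set X}

open Classical in
/-- The retraction onto `A`, sending everything outside `A` to `c₀`. -/
noncomputable def hret (A : Set X) (c₀ : X) : X → X :=
  fun x => if x ∈ A then x else c₀

lemma hret_mem_SF1_GG (hF : IsFilterSet F) (c₀ : X) : hret A c₀ ∈ SF1 (GG F A) := by
  intro B hB
  refine GG_superset (GG_inter hF (A_mem_GG hF) hB) ?_
  rintro x ⟨hxA, hxB⟩
  simp only [Set.mem_preimage, hret, if_pos hxA]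
  exact hxB

lemma hret_not_mem_SF1 (hA : A ∉ F) {B₀ : Set X} (hB₀F : B₀ ∈ F) {c₀ : X} (hc₀ : c₀ ∉ B₀)
    (hF : IsFilterSet F) : hret A c₀ ∉ SF1 F := by
  intro h
  have h2 := h B₀ hB₀F
  apply hA
  refine hF.2.1 _ h2 _ ?_
  intro x hx
  simp only [Set.mem_preimage, hret] at hx
  by_cases hxA : x ∈ A
  · exact hxA
  · rw [if_neg hxA] at hx
    exact absurd hx hc₀

/-- If (2) fails, then (1) fails. -/
lemma not2_not1 (hF : IsFilterSet F) (hF1 : F ≠ {Set.univ}) (hF2 : F ≠ Set.univ)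
    (hA : A ∉ F) (Hne : ∀ f ∈ SF1 F, f ⁻¹' A ≠ ∅) :
    ∃ G : Set (Set X), IsFilterSet G ∧ G ≠ {Set.univ} ∧ G ≠ Set.univ ∧
      F ⊂ G ∧ SF1 F ⊂ SF1 G := by
  have hpos := pos_of_bad hF hF2 Hne
  have hAuniv : A ≠ Set.univ := fun h => hA (h ▸ filt_univ_mem hF)
  obtain ⟨B₀, hB₀F, hB₀⟩ := filt_exists_proper hF hF1
  obtain ⟨c₀, hc₀⟩ : ∃ c, c ∉ B₀ := by
    by_contra h
    push_neg at h
    exact hB₀ (Set.eq_univ_of_forall h)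
  refine ⟨GG F A, ⟨⟨A, A_mem_GG hF⟩, fun B hB B' h => GG_superset hB h,
      fun B hB B' hB' => GG_inter hF hB hB'⟩, ?_, ?_, ?_, ?_⟩
  · intro h
    have : A ∈ ({Set.univ} : Set (Set X)) := h ▸ A_mem_GG hF
    exact hAuniv this
  · intro h
    exact GG_empty_not_mem hpos (h ▸ Set.mem_univ _)
  · constructor
    · exact fun B hB => mem_GG_of_mem_F hB
    · intro h
      exact hA (h (A_mem_GG hF))
  · constructor
    · exact fun g hg => SF1_subset_SF1_GG hF hg
    · intro h
      exact hret_not_mem_SF1 hA hB₀F hc₀ hF (h (hret_mem_SF1_GG hF c₀))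

end Bad2

section Bad3

variable {X : Type} {F : Set (Set X)} {A : Set X}

lemma SF1_subset_NN (hF : IsFilterSet F) {g : X → X} (hg : g ∈ SF1 F) : g ∈ NN F A :=
  ⟨Set.univ, mem_GG_of_mem_F (filt_univ_mem hF), g, hg, fun _ _ => rfl⟩

/-- Members of `NN` pull `GG`-sets back to `GG`-sets. -/
lemma NN_pull (hF : IsFilterSet F) {g : X → X} (hg : g ∈ NN F A) {V : Set X}
    (hV : V ∈ GG F A) : g ⁻¹' V ∈ GG F A := by
  obtain ⟨W, hW, m, hm, heq⟩ := hg
  obtain ⟨C, hC, u, hu, hsub⟩ := hV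
  refine GG_superset (GG_inter hF hW
    (⟨m ⁻¹' C, hm C hC, fun x => u (m x), comp_mem_SF1 hu hm, Set.Subset.refl _⟩ : _ ∈ GG F A)) ?_
  rintro x ⟨hxW, hxC, hxA⟩
  simp only [Set.mem_preimage]
  rw [heq x hxW]
  exact hsub ⟨hxC, hxA⟩

lemma isClone_DD : IsClone (DD F A) := by
  constructor
  · intro n i g hg
    exact hg i
  · intro n m f g hf hg k hk
    exact hf (fun i y => g i fun j => k j y) (fun i => hg i k hk)

lemma UF_subset_DD (hF : IsFilterSet F) : UF F ⊆ DD F A := by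
  rintro ⟨n, f⟩ hf g hg
  choose W hW m hm heq using fun i => hg i
  refine ⟨⋂ i, W i, fin_iInter_mem (fun B hB B' hB' => GG_inter hF hB hB') n W hW,
    fun x => f fun i => m i x, hf m hm, ?_⟩
  intro x hx
  rw [Set.mem_iInter] at hx
  show f (fun i => g i x) = f (fun i => m i x)
  exact congrArg f (funext fun i => heq i x (hx i))

lemma hret_op_mem_DD (hF : IsFilterSet F) {c₀ : X} :
    (⟨0, fun x => hret A c₀ (x 0)⟩ : Ops X) ∈ DD F A := by
  intro g hg
  obtain ⟨W, hW, m, hm, heq⟩ := hg 0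
  refine ⟨W ∩ (g 0) ⁻¹' A, GG_inter hF hW (NN_pull hF (hg 0) (A_mem_GG hF)), m, hm, ?_⟩
  rintro x ⟨hxW, hxA⟩
  show hret A c₀ (g 0 x) = m x
  have hgA : g 0 x ∈ A := hxA
  rw [show hret A c₀ (g 0 x) = g 0 x from if_pos hgA]
  exact heq x hxW

lemma const_not_mem_NN (hF : IsFilterSet F)
    (hpos : ∀ f ∈ SF1 F, ∀ C ∈ F, (C ∩ f ⁻¹' A).Nonempty)
    {B₀ : Set X} (hB₀F : B₀ ∈ F) {c₀ : X} (hc₀ : c₀ ∉ B₀) :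
    (fun _ : X => c₀) ∉ NN F A := by
  rintro ⟨W, hW, m, hm, heq⟩
  have h1 : W ∩ m ⁻¹' B₀ ∈ GG F A := GG_inter hF hW (mem_GG_of_mem_F (hm B₀ hB₀F))
  have h2 : (W ∩ m ⁻¹' B₀).Nonempty := by
    rw [Set.nonempty_iff_ne_empty]
    intro h
    exact GG_empty_not_mem hpos (h ▸ h1)
  obtain ⟨x, hxW, hxB⟩ := h2
  have hmx : m x ∈ B₀ := hxB
  rw [← heq x hxW] at hmx
  exact hc₀ hmx

/-- If (2) fails, then `U_F` is not precomplete. -/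
lemma not2_not0 (hF : IsFilterSet F) (hF1 : F ≠ {Set.univ}) (hF2 : F ≠ Set.univ)
    (hA : A ∉ F) (Hne : ∀ f ∈ SF1 F, f ⁻¹' A ≠ ∅) :
    ¬ IsPrecompleteClone (UF F) := by
  have hpos := pos_of_bad hF hF2 Hne
  obtain ⟨B₀, hB₀F, hB₀⟩ := filt_exists_proper hF hF1
  obtain ⟨c₀, hc₀⟩ : ∃ c, c ∉ B₀ := by
    by_contra h
    push_neg at h
    exact hB₀ (Set.eq_univ_of_forall h)
  rintro ⟨hclone, hne, hmax⟩
  have hss : UF F ⊂ DD F A := by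
    refine ⟨UF_subset_DD hF, ?_⟩
    intro h
    have hin : (⟨0, fun x => hret A c₀ (x 0)⟩ : Ops X) ∈ UF F := h (hret_op_mem_DD hF)
    have : hret A c₀ ∈ SF1 F := hin (fun _ x => x) (fun _ => id_mem_SF1)
    exact hret_not_mem_SF1 hA hB₀F hc₀ hF this
  have hDuniv : DD F A = Set.univ := hmax _ isClone_DD hss
  have hconst : (⟨0, fun _ => c₀⟩ : Ops X) ∈ DD F A := hDuniv ▸ Set.mem_univ _
  have : (fun _ : X => c₀) ∈ NN F A := hconst (fun _ x => x) (fun _ => SF1_subset_NN hF id_mem_SF1)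
  exact const_not_mem_NN hF hpos hB₀F hc₀ this

end Bad3

section Gen

variable {X : Type} {F : Set (Set X)}

lemma imp23 (hF : IsFilterSet F)
    (h2 : ∀ A : Set X, A ∉ F → ∃ f : X → X, f ∈ SF1 F ∧ f ⁻¹' A = ∅) :
    ∀ h : X → X, h ∉ SF1 F →
      cloneGen (SF F ∪ {(⟨0, fun x => h (x 0)⟩ : Ops X)}) = Set.univ := by
  intro h hh
  have hex : ∃ B₀ ∈ F, h ⁻¹' B₀ ∉ F := by
    by_contra hc
    push_neg at hc
    exact hh hc
  obtain ⟨B₀, hB₀F, hB₀⟩ := hex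
  obtain ⟨f0, hf0, hf0e⟩ := h2 _ hB₀
  have havoid : ∀ z : X, h (f0 z) ∉ B₀ := by
    intro z hz
    have : z ∈ f0 ⁻¹' (h ⁻¹' B₀) := hz
    rw [hf0e] at this
    exact this
  rw [Set.eq_univ_iff_forall]
  rintro ⟨n, t⟩
  intro C hC
  obtain ⟨hCclone, hCbase⟩ := hC
  classical
  have hhop : (⟨0, fun x => h (x 0)⟩ : Ops X) ∈ C := hCbase (Set.mem_union_right _ rfl)
  have hf0n : (⟨n, fun x : Fin (n + 1) → X => f0 (x 0)⟩ : Ops X) ∈ C :=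
    hCbase (Set.mem_union_left _ (SF1_op_mem hf0 n))
  have ghf : (⟨n, fun x : Fin (n + 1) → X => h (f0 (x 0))⟩ : Ops X) ∈ C :=
    hCclone.2 0 n (fun y => h (y 0)) (fun _ x => f0 (x 0)) hhop (fun _ => hf0n)
  set Fs : (Fin (n + 1 + 1) → X) → X :=
    fun y => if y (Fin.last (n + 1)) ∈ B₀ then y (Fin.last (n + 1))
             else t (fun i => y i.castSucc) with hFs
  have hFsSF : (⟨n + 1, Fs⟩ : Ops X) ∈ SF F := by
    intro B hB
    refine ⟨B ∩ B₀, hF.2.2 _ hB _ hB₀F, ?_⟩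
    rintro y ⟨x, hx, rfl⟩
    have hl := hx (Fin.last (n + 1))
    show Fs x ∈ B
    rw [hFs]
    simp only
    rw [if_pos hl.2]
    exact hl.1
  have hFsC : (⟨n + 1, Fs⟩ : Ops X) ∈ C := hCbase (Set.mem_union_left _ hFsSF)
  set g : Fin (n + 1 + 1) → (Fin (n + 1) → X) → X :=
    fun i x => if hi : (i : ℕ) < n + 1 then x ⟨i, hi⟩ else h (f0 (x 0)) with hg
  have hgC : ∀ i, (⟨n, g i⟩ : Ops X) ∈ C := by
    intro i
    rcases Nat.lt_or_ge (i : ℕ) (n + 1) with hi | hi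
    · have he : g i = fun x => x ⟨(i : ℕ), hi⟩ := by
        funext x
        rw [hg]
        simp only
        rw [dif_pos hi]
      rw [he]
      exact hCclone.1 n _
    · have he : g i = fun x : Fin (n + 1) → X => h (f0 (x 0)) := by
        funext x
        rw [hg]
        simp only
        rw [dif_neg (Nat.not_lt.mpr hi)]
      rw [he]
      exact ghf
  have hcomp := hCclone.2 (n + 1) n Fs g hFsC hgC
  have heqt : (fun x => Fs fun i => g i x) = t := by
    funext x
    have h1 : g (Fin.last (n + 1)) x = h (f0 (x 0)) := by
      rw [hg]
      simp only
      rw [dif_neg (by simp)]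
    show Fs (fun i => g i x) = t x
    rw [hFs]
    simp only
    rw [h1, if_neg (havoid (x 0))]
    congr 1
    funext i
    show g i.castSucc x = x i
    rw [hg]
    simp only
    rw [dif_pos (show ((i.castSucc : Fin (n+2)) : ℕ) < n + 1 by simpa using i.isLt)]
    congr 1
  exact (congrArg (fun u => (⟨n, u⟩ : Ops X)) heqt) ▸ hcomp

lemma imp30 (hF : IsFilterSet F) (hF1 : F ≠ {Set.univ}) (hF2 : F ≠ Set.univ)
    (h3 : ∀ h : X → X, h ∉ SF1 F →
      cloneGen (SF F ∪ {(⟨0, fun x => h (x 0)⟩ : Ops X)}) = Set.univ) :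
    IsPrecompleteClone (UF F) := by
  refine ⟨isClone_UF, UF_ne_univ hF hF1 hF2, ?_⟩
  intro D hD hss
  obtain ⟨f, hfD, hfU⟩ := Set.exists_of_ssubset hss
  obtain ⟨n, f₂⟩ := f
  have hex : ∃ g : Fin (n + 1) → X → X, (∀ i, g i ∈ SF1 F) ∧
      (fun x => f₂ fun i => g i x) ∉ SF1 F := by
    by_contra hc
    push_neg at hc
    exact hfU fun g hg => hc g hg
  obtain ⟨g, hg, hk⟩ := hex
  have hkop : (⟨0, fun x : Fin 1 → X => f₂ (fun i => g i (x 0))⟩ : Ops X) ∈ D :=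
    hD.2 n 0 f₂ (fun i => fun x : Fin 1 → X => g i (x 0)) hfD
      (fun i => hss.1 (SF1_op_mem_UF (hg i)))
  have h3k := h3 (fun x => f₂ fun i => g i x) hk
  have hsub : cloneGen (SF F ∪
      {(⟨0, fun x : Fin 1 → X => (fun y => f₂ fun i => g i y) (x 0)⟩ : Ops X)}) ⊆ D := by
    intro o ho
    exact ho D ⟨hD, Set.union_subset ((SF_subset_UF hF).trans hss.1)
      (Set.singleton_subset_iff.mpr hkop)⟩
  rw [h3k] at hsub
  exact Set.eq_univ_of_univ_subset hsub

end Gen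


/-- For a proper filter `F` on an infinite set, the following are equivalent:
(0) `U_F` is precomplete; (1) there is no proper filter `G ⊋ F` with
`S_F^{(1)} ⊊ S_G^{(1)}`; (2) every `A ∉ F` has an `F`-continuous unary function
with `f⁻¹[A] = ∅`; (3) `⟨S_F ∪ {h}⟩ = O` for each unary `h ∉ S_F^{(1)}`. -/
theorem stmt18 {X : Type} [Infinite X]
    {F : Set (Set X)} (hF : IsFilterSet F)
    (hF1 : F ≠ {Set.univ}) (hF2 : F ≠ Set.univ) :
    List.TFAE [
      IsPrecompleteClone (UF F),
      ¬ ∃ G : Set (Set X), IsFilterSet G ∧ G ≠ {Set.univ} ∧ G ≠ Set.univ ∧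
          F ⊂ G ∧ SF1 F ⊂ SF1 G,
      ∀ A : Set X, A ∉ F → ∃ f : X → X, f ∈ SF1 F ∧ f ⁻¹' A = ∅,
      ∀ h : X → X, h ∉ SF1 F →
        cloneGen (SF F ∪ {(⟨0, fun x => h (x 0)⟩ : Ops X)}) = Set.univ ] := by
  tfae_have 3 → 2 := by
    intro h2
    rintro ⟨G, hGf, hG1, hG2, hFG, hMN⟩
    obtain ⟨A, hAG, hAF⟩ := Set.exists_of_ssubset hFG
    obtain ⟨f, hfM, hfe⟩ := h2 A hAF
    have hin : f ⁻¹' A ∈ G := hMN.1 hfM A hAG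
    rw [hfe] at hin
    exact hG2 (Set.eq_univ_of_forall fun B => hGf.2.1 ∅ hin B (Set.empty_subset B))
  tfae_have 2 → 3 := by
    intro h1 A hA
    by_contra hc
    push_neg at hc
    exact h1 (not2_not1 hF hF1 hF2 hA
      (fun f hf => Set.nonempty_iff_ne_empty.mp (hc f hf)))
  tfae_have 1 → 3 := by
    intro h0 A hA
    by_contra hc
    push_neg at hc
    exact not2_not0 hF hF1 hF2 hA
      (fun f hf => Set.nonempty_iff_ne_empty.mp (hc f hf)) h0
  tfae_have 3 → 4 := imp23 hF
  tfae_have 4 → 1 := imp30 hF hF1 hF2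
  tfae_finish
end

section
/- Let X be an infinite set and let I be a proper ideal on X with full support, i.e., a collection of subsets of X closed under taking subsets and finite unions, containing all finite subsets of X, and with I ≠ P(X). Then C_I = O (every finitary operation f on X satisfies f[A^n] ∈ I for all A ∈ I) if and only if there exists an infinite cardinal λ ≤ |X| such that I = I_λ := { S ⊆ X : |S| < λ }. -/
/-- On an infinite set `X`, a proper ideal `I` with full support induces the
full clone iff `I = I_λ = { S : |S| < λ }` for some infinite cardinal `λ ≤ |X|`. -/
theorem stmt19 {X : Type} [Infinite X] {I : Set (Set X)}
    (hdown : ∀ A ∈ I, ∀ B ⊆ A, B ∈ I)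
    (hunion : ∀ A ∈ I, ∀ B ∈ I, A ∪ B ∈ I)
    (hfin : ∀ A : Set X, A.Finite → A ∈ I)
    (hproper : I ≠ Set.univ) :
    idealClone I = Set.univ ↔
      ∃ lam : Cardinal, Cardinal.aleph0 ≤ lam ∧ lam ≤ Cardinal.mk X ∧
        I = {S : Set X | Cardinal.mk S < lam} := by

  constructor
  · intro hfull
    have huniv_ni : (Set.univ : Set X) ∉ I := fun h =>
      hproper (Set.eq_univ_of_forall fun S => hdown _ h S (Set.subset_univ S))
    set Ic : Set Cardinal := {c | ∃ S : Set X, S ∉ I ∧ Cardinal.mk S = c} with hIc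
    have hne : Ic.Nonempty := ⟨_, Set.univ, huniv_ni, rfl⟩
    have hmem : sInf Ic ∈ Ic := csInf_mem hne
    obtain ⟨T, hTni, hTc⟩ := hmem
    have hTinf : T.Infinite := fun hf => hTni (hfin T hf)
    refine ⟨sInf Ic, ?_, ?_, ?_⟩
    · rw [← hTc]
      have : Infinite ↥T := hTinf.to_subtype
      exact Cardinal.infinite_iff.1 this
    · have := csInf_le (OrderBot.bddBelow Ic) (show Cardinal.mk ↥(Set.univ : Set X) ∈ Ic from ⟨Set.univ, huniv_ni, rfl⟩)
      simpa [Cardinal.mk_univ] using this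
    · ext S
      simp only [Set.mem_setOf_eq]
      constructor
      · intro hS
        by_contra hge
        push_neg at hge
        have hTS : Cardinal.mk ↥T ≤ Cardinal.mk ↥S := hTc ▸ hge
        obtain ⟨e⟩ := Cardinal.le_def _ _ |>.1 hTS
        have : Nonempty ↥T := hTinf.to_subtype.nonempty
        have hsurj : Function.Surjective (Function.invFun e) := Function.invFun_surjective e.injective
        classical
        let g : X → X := fun x => if h : x ∈ S then ((Function.invFun e ⟨x, h⟩ : ↥T) : X) else Classical.arbitrary X
        have hop : (⟨0, fun v => g (v 0)⟩ : Ops X) ∈ idealClone I := by rw [hfull]; trivial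
        have himg : opImage (⟨0, fun v => g (v 0)⟩ : Ops X) S ∈ I := hop S hS
        have hsub : T ⊆ opImage (⟨0, fun v => g (v 0)⟩ : Ops X) S := by
          intro t ht
          obtain ⟨a, ha⟩ := hsurj ⟨t, ht⟩
          refine ⟨fun _ => (a : X), fun i => a.2, ?_⟩
          show g (a : X) = t
          simp only [g, dif_pos a.2]
          rw [Subtype.coe_eta, ha]
        exact hTni (hdown _ himg T hsub)
      · intro hS
        by_contra hni
        exact absurd (csInf_le (OrderBot.bddBelow Ic) ⟨S, hni, rfl⟩) (not_le.2 hS)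
  · rintro ⟨lam, hlam0, hlamX, rfl⟩
    apply Set.eq_univ_of_forall
    intro f A hA
    simp only [Set.mem_setOf_eq] at hA ⊢
    have h1 : Cardinal.mk ↥(opImage f A) ≤ Cardinal.mk ↥{x : Fin (f.1 + 1) → X | ∀ i, x i ∈ A} :=
      Cardinal.mk_image_le
    have h2 : Cardinal.mk ↥{x : Fin (f.1 + 1) → X | ∀ i, x i ∈ A}
        = Cardinal.mk ↥A ^ (f.1 + 1 : ℕ) := by
      have e1 : ↥{x : Fin (f.1 + 1) → X | ∀ i, x i ∈ A} ≃ (Fin (f.1 + 1) → ↥A) :=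
        Equiv.subtypePiEquivPi
      rw [Cardinal.mk_congr e1, ← Cardinal.power_def, Cardinal.mk_fin, Cardinal.power_natCast]
    rcases lt_or_ge (Cardinal.mk ↥A) Cardinal.aleph0 with hfA | hiA
    · have : Cardinal.mk ↥A ^ ((f.1 + 1 : ℕ) : Cardinal) < Cardinal.aleph0 :=
        Cardinal.power_lt_aleph0 hfA (Cardinal.nat_lt_aleph0 _)
      exact lt_of_le_of_lt (h1.trans_eq h2) (this.trans_le hlam0)
    · have : Cardinal.mk ↥A ^ ((f.1 + 1 : ℕ) : Cardinal) ≤ Cardinal.mk ↥A :=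
        Cardinal.pow_le hiA (Cardinal.nat_lt_aleph0 _)
      exact lt_of_le_of_lt (h1.trans_eq h2) (lt_of_le_of_lt this hA)
end
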